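/- arXiv:2601.13321 — 2 statements merged into one kernel-verified Lean document; each statement's English description precedes it below -/
import Mathlib

section
/- Let S be a positively totally ordered monoid that is 0-continuous and has uncountable degree Deg(S). Then S is not initially Archimedean: for every a ∈ S⁺ there exist x, y ∈ S with 0 < x < y < a and n·x < y for all n ∈ ℕ. In particular, S is not Archimedean. -/
open Cardinal Set

noncomputable section

/-- The type of `ι`-indexed sequences in `A`, as a type synonym carrying the bounded topology. -/
def GSeq (ι A : Type) : Type := ι → A

/-- The bounded topology on `GSeq ι A`: the topology generated by the cones
`N_s = {y | ∀ i < b, y i = x i}`. -/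
instance GSeq.topologicalSpace (ι A : Type) [LinearOrder ι] : TopologicalSpace (GSeq ι A) :=
  TopologicalSpace.generateFrom
    {C : Set (GSeq ι A) | ∃ (x : ι → A) (b : ι), C = {y : GSeq ι A | ∀ i, i < b → y i = x i}}

/-- The weight of a topological space: the least cardinality of a basis for its topology. -/
def tweight (X : Type) [TopologicalSpace X] : Cardinal :=
  ⨅ B : {B : Set (Set X) // TopologicalSpace.IsTopologicalBasis B}, #↥(B.1)

/-- `S` is a positively totally ordered monoid (on top of given `AddMonoid` and `LinearOrder`
structures): the addition is weakly monotone in both arguments, `0` is the least element, and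
the positive cone `S⁺ = {a | 0 < a}` is nonempty. -/
structure IsPTOM (S : Type*) [AddMonoid S] [LinearOrder S] : Prop where
  add_le_add : ∀ a b c d : S, a ≤ b → c ≤ d → a + c ≤ b + d
  zero_le : ∀ a : S, 0 ≤ a
  exists_pos : ∃ a : S, 0 < a

/-- The sum of `f` over a finite set `F` of indices, taken in increasing order of the indices. -/
def finSum {ι : Type*} [LinearOrder ι] {S : Type*} [AddMonoid S] (f : ι → S) (F : Finset ι) : S :=
  ((F.sort (· ≤ ·)).map f).sum

/-- `μ` is a continuous measure: every singleton is measurable and has measure `0`. -/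
def MeasureContinuous {X : Type} [TopologicalSpace X] {S : Type*} [Zero S]
    (M : Set (Set X)) (μ : Set X → S) : Prop :=
  ∀ x : X, {x} ∈ M ∧ μ {x} = 0

/-- The degree of `S`: the least cardinality of a subset of the positive cone `S⁺`
that is coinitial in `S⁺`. -/
def degree (S : Type*) [Zero S] [LinearOrder S] : Cardinal :=
  ⨅ A : {A : Set S // (∀ a ∈ A, 0 < a) ∧ ∀ ε : S, 0 < ε → ∃ a ∈ A, a ≤ ε}, #↥(A.1)

/-- `S` is `0`-continuous: its degree is infinite and `S⁺` contains a coinitial,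
strongly decreasing sequence. -/
def ZeroContinuous (S : Type) [AddMonoid S] [LinearOrder S] : Prop :=
  ℵ₀ ≤ degree S ∧ ∃ (δ : Ordinal.{0}) (a : δ.ToType → S),
    (∀ i, 0 < a i) ∧ (∀ ε : S, 0 < ε → ∃ i, a i ≤ ε) ∧
    ∀ i j : δ.ToType, j < i → a i + a i < a j

/-!
Let `(aᵢ)` be the strongly decreasing coinitial sequence. Its index set has no countable cofinal
subset, since otherwise `S⁺` would have a countable coinitial subset. Hence, given `b > 0`, a
strictly increasing `ℕ`-sequence of indices `j 0 < j 1 < ⋯` starting at some `i` with `a i ≤ b`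
is bounded by an index `m`. Each step at least halves the term, so
`n • a m ≤ 2ⁿ • a (j (n + 2)) ≤ a (j 2) < a (j 1)`: take `x = a m` and `y = a (j 1)`.
-/

theorem two_pow_nsmul_le_of_two_nsmul_le {S : Type*} [AddMonoid S] [Preorder S] [AddLeftMono S]
    [AddRightMono S] {f : ℕ → S} (hf : ∀ k, 2 • f (k + 1) ≤ f k) (n : ℕ) :
    2 ^ n • f n ≤ f 0 := by
  induction n with
  | zero => simp
  | succ n ih =>
    calc 2 ^ (n + 1) • f (n + 1) = 2 ^ n • 2 • f (n + 1) := by rw [pow_succ', mul_nsmul]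
      _ ≤ 2 ^ n • f n := nsmul_le_nsmul_right (hf n) _
      _ ≤ f 0 := ih

namespace IsPTOM

variable {S : Type*} [AddMonoid S] [LinearOrder S]

theorem addLeftMono (hS : IsPTOM S) : AddLeftMono S :=
  ⟨fun a _ _ h => hS.add_le_add a a _ _ le_rfl h⟩

theorem addRightMono (hS : IsPTOM S) : AddRightMono S :=
  ⟨fun a _ _ h => hS.add_le_add _ _ a a h le_rfl⟩

theorem strictAnti_of_add_self_lt (hS : IsPTOM S) {ι : Type*} [Preorder ι] {a : ι → S}
    (hdec : ∀ i j, j < i → a i + a i < a j) : StrictAnti a := by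
  have := hS.addLeftMono
  exact fun j i hji => (le_add_of_nonneg_right (hS.zero_le _)).trans_lt (hdec i j hji)

theorem exists_forall_nsmul_lt (hS : IsPTOM S) {ι : Type*} [LinearOrder ι]
    {a : ι → S} (hpos : ∀ i, 0 < a i) (hcoi : ∀ ε : S, 0 < ε → ∃ i, a i ≤ ε)
    (hdec : ∀ i j, j < i → a i + a i < a j) (hbdd : ∀ j : ℕ → ι, ∃ m, ∀ k, j k < m)
    {b : S} (hb : 0 < b) : ∃ x y : S, 0 < x ∧ x < y ∧ y < b ∧ ∀ n : ℕ, n • x < y := by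
  have := hS.addLeftMono
  have := hS.addRightMono
  have hanti := hS.strictAnti_of_add_self_lt hdec
  have : NoMaxOrder ι := ⟨fun i => (hbdd fun _ => i).imp fun _ h => h 0⟩
  obtain ⟨i, hi⟩ := hcoi b hb
  obtain ⟨j, hj, rfl⟩ := Nat.exists_strictMono' i
  obtain ⟨m, hm⟩ := hbdd j
  refine ⟨a m, a (j 1), hpos m, hanti (hm 1), (hanti (hj one_pos)).trans_le hi, fun n => ?_⟩
  have hhalf : ∀ k, 2 • a (j (k + 2 + 1)) ≤ a (j (k + 2)) := fun k =>
    (two_nsmul (a _)).trans_le (hdec _ _ (hj (Nat.lt_succ_self _))).le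
  calc n • a m ≤ 2 ^ n • a m := nsmul_le_nsmul_left (hS.zero_le _) Nat.lt_two_pow_self.le
    _ ≤ 2 ^ n • a (j (n + 2)) := nsmul_le_nsmul_right (hanti (hm _)).le _
    _ ≤ a (j 2) := two_pow_nsmul_le_of_two_nsmul_le (f := fun k => a (j (k + 2))) hhalf n
    _ < a (j 1) := hanti (hj one_lt_two)

end IsPTOM

theorem degree_le_mk {S : Type*} [Zero S] [LinearOrder S] {A : Set S} (hpos : ∀ a ∈ A, 0 < a)
    (hcoi : ∀ ε : S, 0 < ε → ∃ a ∈ A, a ≤ ε) : degree S ≤ #A :=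
  ciInf_le' (fun A : {A : Set S // (∀ a ∈ A, 0 < a) ∧ ∀ ε : S, 0 < ε → ∃ a ∈ A, a ≤ ε} => #A.1)
    ⟨A, hpos, hcoi⟩

theorem exists_forall_lt_of_aleph0_lt_degree {S : Type*} [Zero S] [LinearOrder S]
    {ι : Type*} [LinearOrder ι] {a : ι → S} (hpos : ∀ i, 0 < a i) (hanti : Antitone a)
    (hcoi : ∀ ε : S, 0 < ε → ∃ i, a i ≤ ε) (hdeg : ℵ₀ < degree S) (j : ℕ → ι) :
    ∃ m, ∀ k, j k < m := by
  by_contra! hcof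
  have hrange : degree S ≤ #(range (a ∘ j)) := by
    refine degree_le_mk (by simp [hpos]) fun ε hε => ?_
    obtain ⟨i, hi⟩ := hcoi ε hε
    obtain ⟨k, hk⟩ := hcof i
    exact ⟨a (j k), mem_range_self k, (hanti hk).trans hi⟩
  exact hdeg.not_ge (hrange.trans (countable_range _).le_aleph0)

/-- every `0`-continuous positively totally ordered monoid of uncountable degree
is not initially Archimedean: below every positive `a` there are `0 < x < y < a` with
`n·x < y` for all `n`. In particular, `S` is not Archimedean. -/
theorem statement_16 (S : Type) [AddMonoid S] [LinearOrder S] (hS : IsPTOM S)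
    (hzc : ZeroContinuous S) (hdeg : ℵ₀ < degree S) :
    (∀ a : S, 0 < a → ∃ x y : S, 0 < x ∧ x < y ∧ y < a ∧ ∀ n : ℕ, n • x < y) ∧
    ¬ (∀ x y : S, 0 < x → x < y → ∃ n : ℕ, y ≤ n • x) := by
  obtain ⟨-, δ, a, hpos, hcoi, hdec⟩ := hzc
  have hbdd := exists_forall_lt_of_aleph0_lt_degree hpos
    (hS.strictAnti_of_add_self_lt hdec).antitone hcoi hdeg
  have hsep := fun b (hb : 0 < b) => hS.exists_forall_nsmul_lt hpos hcoi hdec hbdd hb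
  refine ⟨hsep, fun harch => ?_⟩
  obtain ⟨b, hb⟩ := hS.exists_pos
  obtain ⟨x, y, hx, hxy, -, hsmall⟩ := hsep b hb
  obtain ⟨n, hn⟩ := harch x y hx hxy
  exact (hsmall n).not_ge hn

end
end

section
/- Let κ ≤ λ be infinite cardinals with κ regular, and let δ ≤ λ be a regular cardinal. Let S be the positively totally ordered monoid whose underlying set is the set of ordinals ≤ κ, ordered by the reverse of the ordinal order (so that κ is the least element), with monoid operation the ordinal minimum and neutral element κ. Then there exist a family 𝔐 of subsets of ᵏλ and a function μ : 𝔐 → S such that (ᵏλ, 𝔐, μ) is a continuous weak δ-measure space and supp(μ) = ᵏλ, i.e., μ(O) > 0 for every nonempty open set O. -/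
open Cardinal Set

noncomputable section

/-- `(X, M, μ)` is a weak `δ`-measure space (`delta` playing the role of `δ`):
`M` contains all open sets and is closed under unions of fewer than `delta` many sets,
and `μ` satisfies the axioms (M1)-(M5) for families indexed by ordinals `γ < delta`. -/
structure IsWeakMeasureSpaceLT (X : Type) [TopologicalSpace X] (delta : Cardinal)
    (S : Type*) [AddMonoid S] [LinearOrder S] (M : Set (Set X)) (μ : Set X → S) : Prop where
  open_mem : ∀ U : Set X, IsOpen U → U ∈ M
  sUnion_mem : ∀ 𝒜 : Set (Set X), 𝒜 ⊆ M → #↥𝒜 < delta → ⋃₀ 𝒜 ∈ M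
  measure_empty : μ ∅ = 0
  measure_univ_pos : 0 < μ Set.univ
  mono : ∀ A B : Set X, A ∈ M → B ∈ M → A ⊆ B → μ A ≤ μ B
  additive : ∀ (γ : Ordinal) (A : γ.ToType → Set X), γ < delta.ord →
    (∀ i, A i ∈ M) → Pairwise (Function.onFun Disjoint A) →
    IsLUB {s : S | ∃ F : Finset γ.ToType, s = finSum (fun i => μ (A i)) F} (μ (⋃ i, A i))
  point_reg : ∀ (x : X) (γ : Ordinal) (A : γ.ToType → Set X),
    {x} ∈ M → γ < delta.ord →
    (∀ i, IsOpen (A i) ∧ x ∈ A i) →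
    (∀ U : Set X, IsOpen U → x ∈ U → ∃ i, A i ⊆ U) →
    IsGLB (Set.range fun i => μ (A i)) (μ {x})

/-- The set of ordinals `≤ κ`, with the *reverse* order (so `κ` is the least element), with
monoid operation the ordinal minimum and neutral element `κ`. -/
def RevOrd (κ : Cardinal) : Type 1 := {o : Ordinal // o ≤ κ.ord}

instance (κ : Cardinal) : LinearOrder (RevOrd κ) :=
  LinearOrder.lift' (fun a : RevOrd κ => OrderDual.toDual a.1)
    (fun a b h => Subtype.ext (OrderDual.toDual.injective h))

instance (κ : Cardinal) : Zero (RevOrd κ) := ⟨⟨κ.ord, le_rfl⟩⟩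

instance (κ : Cardinal) : Add (RevOrd κ) :=
  ⟨fun a b => ⟨min a.1 b.1, le_trans (min_le_left _ _) a.2⟩⟩

instance (κ : Cardinal) : AddMonoid (RevOrd κ) where
  add_assoc a b c := Subtype.ext (min_assoc _ _ _)
  zero_add a := Subtype.ext (min_eq_right a.2)
  add_zero a := Subtype.ext (min_eq_left a.2)
  nsmul := nsmulRec
  nsmul_zero _ := rfl
  nsmul_succ _ _ := rfl

/-!
The measure of a set `S ⊆ ᵏλ` is its *cone rank*: the least `α < κ` such that `S` cannot be
covered by fewer than `δ` cones `N_s` with `dom s > α` (or `κ` if there is none). Since `δ ≤ λ`,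
a cone of length `β` is never covered by fewer than `δ` strictly longer cones, so nonempty open
sets have rank `< κ`, i.e. positive measure; regularity of `δ` makes the small sets at a fixed
level a `δ`-complete ideal, which is exactly the additivity (M4) for the minimum operation; and
a point lies in cones of every length `< κ`, which gives continuity and (M5).
-/

namespace Ordinal.ToType

variable {o α : Ordinal}

theorem coe_lt_coe {a b : o.ToType} : (a : Ordinal) < b ↔ a < b :=
  Subtype.coe_lt_coe.trans ToType.mk.symm.lt_iff_lt

theorem exists_lt_coe (ho : Order.IsSuccLimit o) (hα : α < o) : ∃ b : o.ToType, α < b :=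
  ⟨ToType.mk ⟨Order.succ α, ho.succ_lt hα⟩, by
    simpa only [OrderIso.symm_apply_apply] using Order.lt_succ α⟩

end Ordinal.ToType

theorem finSum_singleton {ι S : Type*} [LinearOrder ι] [AddMonoid S] (f : ι → S) (i : ι) :
    finSum f {i} = f i := by
  simp [finSum]

namespace RevOrd

variable {κ : Cardinal}

theorem list_sum_le {l : List (RevOrd κ)} {m : RevOrd κ} (h : ∀ a ∈ l, a ≤ m) : l.sum ≤ m := by
  induction l with
  | nil => exact m.2
  | cons a l ih =>
    rw [List.forall_mem_cons] at h
    rw [List.sum_cons]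
    exact (le_min h.1 (ih h.2) : m.1 ≤ min a.1 l.sum.1)

theorem finSum_le {ι : Type*} [LinearOrder ι] {f : ι → RevOrd κ} {m : RevOrd κ}
    (h : ∀ i, f i ≤ m) (F : Finset ι) : finSum f F ≤ m :=
  list_sum_le fun _ ha =>
    let ⟨i, _, hi⟩ := List.mem_map.1 ha
    hi ▸ h i

end RevOrd

namespace GSeq

section Cones

variable {ι A : Type} [LinearOrder ι]

def cone (x : GSeq ι A) (b : ι) : Set (GSeq ι A) :=
  {y | ∀ i, i < b → y i = x i}

theorem mem_cone_self (x : GSeq ι A) (b : ι) : x ∈ cone x b :=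
  fun _ _ => rfl

theorem isOpen_cone (x : GSeq ι A) (b : ι) : IsOpen (cone x b) :=
  TopologicalSpace.isOpen_generateFrom_of_mem ⟨x, b, rfl⟩

theorem exists_cone_subset_of_isOpen [Nonempty ι] {O : Set (GSeq ι A)} (hO : IsOpen O) :
    ∀ x ∈ O, ∃ b, cone x b ⊆ O := by
  induction hO with
  | basic s hs =>
    obtain ⟨x', b, rfl⟩ := hs
    exact fun x hx => ⟨b, fun y hy i hi => (hy i hi).trans (hx i hi)⟩
  | univ => exact fun x _ => ⟨Classical.arbitrary ι, subset_univ _⟩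
  | inter s t _ _ ihs iht =>
    intro x hx
    obtain ⟨b₁, h₁⟩ := ihs x hx.1
    obtain ⟨b₂, h₂⟩ := iht x hx.2
    exact ⟨max b₁ b₂, fun y hy => ⟨h₁ fun i hi => hy i (hi.trans_le (le_max_left _ _)),
      h₂ fun i hi => hy i (hi.trans_le (le_max_right _ _))⟩⟩
  | sUnion 𝒮 _ ih =>
    rintro x ⟨s, hs, hx⟩
    obtain ⟨b, hb⟩ := ih s hs x hx
    exact ⟨b, hb.trans (subset_sUnion_of_mem hs)⟩

def IsConeSmall (δ : Cardinal) (B : Set ι) (S : Set (GSeq ι A)) : Prop :=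
  ∃ T : Set (GSeq ι A × ι), #T < δ ∧ (∀ p ∈ T, p.2 ∈ B) ∧ S ⊆ ⋃ p ∈ T, cone p.1 p.2

variable {δ : Cardinal} {B B' : Set ι} {S S' : Set (GSeq ι A)}

theorem IsConeSmall.mono (hS : S ⊆ S') (h : IsConeSmall δ B S') : IsConeSmall δ B S :=
  let ⟨T, hT, hTB, hS'⟩ := h
  ⟨T, hT, hTB, hS.trans hS'⟩

theorem IsConeSmall.mono_lengths (hB : B ⊆ B') (h : IsConeSmall δ B S) :
    IsConeSmall δ B' S :=
  let ⟨T, hT, hTB, hS⟩ := h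
  ⟨T, hT, fun p hp => hB (hTB p hp), hS⟩

theorem isConeSmall_empty (hδ : 0 < δ) : IsConeSmall δ B (∅ : Set (GSeq ι A)) :=
  ⟨∅, by simpa using hδ, by simp, empty_subset _⟩

theorem isConeSmall_of_subset_cone (hδ : 1 < δ) {x : GSeq ι A} {b : ι} (hb : b ∈ B)
    (hS : S ⊆ cone x b) : IsConeSmall δ B S :=
  ⟨{(x, b)}, by rwa [mk_singleton], by simpa using hb, by simpa using hS⟩

theorem IsConeSmall.iUnion (hδ : δ.IsRegular) {J : Type} {S : J → Set (GSeq ι A)}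
    (hJ : #J < δ) (h : ∀ k, IsConeSmall δ B (S k)) : IsConeSmall δ B (⋃ k, S k) := by
  choose T hT hTB hS using h
  refine ⟨⋃ k, T k, mk_iUnion_le_sum_mk.trans_lt (sum_lt_of_isRegular hδ hJ hT), ?_, ?_⟩
  · simp only [mem_iUnion]
    rintro p ⟨k, hp⟩
    exact hTB k p hp
  · exact iUnion_subset fun k => (hS k).trans (biUnion_subset_biUnion_left (subset_iUnion T k))

/-- Some value at coordinate `b` is missed by all of the fewer than `#A` cones, and a point of
`cone x b` taking that value at `b` lies in none of them. -/
theorem not_isConeSmall_cone (hδA : δ ≤ #A) {b : ι} (hB : ∀ b' ∈ B, b < b')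
    (x : GSeq ι A) : ¬ IsConeSmall δ B (cone x b) := by
  rintro ⟨T, hT, hTB, hcover⟩
  have hmiss : range (fun p : T => p.1.1 b) ≠ Set.univ := fun h => by
    have := (mk_range_le (f := fun p : T => p.1.1 b)).trans_lt (hT.trans_le hδA)
    rw [h, mk_univ] at this
    exact this.false
  obtain ⟨e, he⟩ := (ne_univ_iff_exists_notMem _).1 hmiss
  let y : GSeq ι A := fun i => if i < b then x i else e
  obtain ⟨p, hp, hyp⟩ := mem_iUnion₂.1 (hcover fun i (hi : i < b) => if_pos hi)
  have hyb : y b = p.1 b := hyp b (hB p.2 (hTB p hp))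
  exact he ⟨⟨p, hp⟩, hyb.symm.trans (if_neg (lt_irrefl b))⟩

end Cones

section Rank

variable {o : Ordinal} {A : Type} {δ : Cardinal} {S S' : Set (GSeq o.ToType A)} {α β : Ordinal}

/-- The `insert o` caps the rank at `o` and keeps `sInf` (junk value `0` on `∅`) away from the
empty set when `S = ∅`, which is small at every level. -/
def coneRank (o : Ordinal) (δ : Cardinal) (S : Set (GSeq o.ToType A)) : Ordinal :=
  sInf (insert o {α | ¬ IsConeSmall δ {b | α < (b : Ordinal)} S})

theorem coneRank_le : coneRank o δ S ≤ o :=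
  csInf_le' (mem_insert _ _)

theorem coneRank_le_of_not_isConeSmall (h : ¬ IsConeSmall δ {b | α < (b : Ordinal)} S) :
    coneRank o δ S ≤ α :=
  csInf_le' (mem_insert_of_mem _ h)

theorem isConeSmall_of_lt_coneRank (h : α < coneRank o δ S) :
    IsConeSmall δ {b | α < (b : Ordinal)} S := by
  by_contra hα
  exact (coneRank_le_of_not_isConeSmall hα).not_gt h

theorem lt_coneRank_of_isConeSmall (hα : α < o) (h : IsConeSmall δ {b | α < (b : Ordinal)} S) :
    α < coneRank o δ S := by
  by_contra! hle
  have hmem := csInf_mem (s := insert o {α | ¬ IsConeSmall δ {b | α < (b : Ordinal)} S})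
    (insert_nonempty _ _)
  rcases hmem with htop | hnot
  · exact (hle.trans_lt hα).ne htop
  · exact hnot (h.mono_lengths fun b hb => (hle.trans_lt hb : _))

theorem coneRank_anti (h : S ⊆ S') : coneRank o δ S' ≤ coneRank o δ S :=
  le_of_forall_lt fun _ hα => lt_coneRank_of_isConeSmall (hα.trans_le coneRank_le)
    ((isConeSmall_of_lt_coneRank hα).mono h)

theorem le_coneRank_iUnion (hδ : δ.IsRegular) {J : Type} {S : J → Set (GSeq o.ToType A)}
    (hJ : #J < δ) (hβ : β ≤ o) (h : ∀ k, β ≤ coneRank o δ (S k)) :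
    β ≤ coneRank o δ (⋃ k, S k) :=
  le_of_forall_lt fun _ hα => lt_coneRank_of_isConeSmall (hα.trans_le hβ)
    (IsConeSmall.iUnion hδ hJ fun k => isConeSmall_of_lt_coneRank (hα.trans_le (h k)))

theorem coneRank_empty (hδ : 0 < δ) : coneRank o δ (∅ : Set (GSeq o.ToType A)) = o :=
  coneRank_le.antisymm <| le_of_forall_lt fun _ hα =>
    lt_coneRank_of_isConeSmall hα (isConeSmall_empty hδ)

theorem coneRank_singleton (ho : Order.IsSuccLimit o) (hδ : 1 < δ) (x : GSeq o.ToType A) :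
    coneRank o δ {x} = o :=
  coneRank_le.antisymm <| le_of_forall_lt fun _ hα =>
    let ⟨_, hb⟩ := Ordinal.ToType.exists_lt_coe ho hα
    lt_coneRank_of_isConeSmall hα
      (isConeSmall_of_subset_cone hδ hb (singleton_subset_iff.2 (mem_cone_self x _)))

theorem coneRank_lt_of_cone_subset (hδA : δ ≤ #A) {x : GSeq o.ToType A} {b : o.ToType}
    (h : cone x b ⊆ S) : coneRank o δ S < o :=
  (coneRank_le_of_not_isConeSmall fun hS => not_isConeSmall_cone hδA
    (fun _ hb' => Ordinal.ToType.coe_lt_coe.1 hb') x (hS.mono h)).trans_lt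
    (mem_Iio.1 (Ordinal.ToType.mk.symm b).2)

end Rank

section Measure

variable {κ δ : Cardinal} {A : Type}

def coneMeasure (κ δ : Cardinal) (S : Set (GSeq κ.ord.ToType A)) : RevOrd κ :=
  ⟨coneRank κ.ord δ S, coneRank_le⟩

theorem coneMeasure_mono {S S' : Set (GSeq κ.ord.ToType A)} (h : S ⊆ S') :
    coneMeasure κ δ S ≤ coneMeasure κ δ S' :=
  coneRank_anti h

theorem coneMeasure_singleton (hκ : ℵ₀ ≤ κ) (hδ : 1 < δ) (x : GSeq κ.ord.ToType A) :
    coneMeasure κ δ {x} = 0 :=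
  Subtype.ext (coneRank_singleton (isSuccLimit_ord hκ) hδ x)

theorem coneMeasure_pos (hκ : ℵ₀ ≤ κ) (hδA : δ ≤ #A) {O : Set (GSeq κ.ord.ToType A)}
    (hO : IsOpen O) (hne : O.Nonempty) : 0 < coneMeasure κ δ O :=
  have : Nonempty κ.ord.ToType := nonempty_ord_toType (aleph0_pos.trans_le hκ).ne'
  let ⟨x, hx⟩ := hne
  let ⟨_, hb⟩ := exists_cone_subset_of_isOpen hO x hx
  coneRank_lt_of_cone_subset hδA hb

theorem isLUB_coneMeasure_iUnion (hδ : δ.IsRegular) {ι : Type} [LinearOrder ι] (hι : #ι < δ)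
    (S : ι → Set (GSeq κ.ord.ToType A)) :
    IsLUB {s | ∃ F : Finset ι, s = finSum (fun i => coneMeasure κ δ (S i)) F}
      (coneMeasure κ δ (⋃ i, S i)) := by
  refine ⟨?_, fun m hm => ?_⟩
  · rintro s ⟨F, rfl⟩
    exact RevOrd.finSum_le (fun i => coneMeasure_mono (subset_iUnion S i)) F
  · exact le_coneRank_iUnion hδ hι m.2 fun i => hm ⟨{i}, (finSum_singleton _ i).symm⟩

theorem isGLB_coneMeasure_singleton (hκ : ℵ₀ ≤ κ) (hδ : 1 < δ) (x : GSeq κ.ord.ToType A)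
    {ι : Type} (U : ι → Set (GSeq κ.ord.ToType A))
    (hU : ∀ V, IsOpen V → x ∈ V → ∃ i, U i ⊆ V) :
    IsGLB (range fun i => coneMeasure κ δ (U i)) (coneMeasure κ δ {x}) := by
  rw [coneMeasure_singleton hκ hδ]
  refine ⟨?_, fun m hm => ?_⟩
  · rintro _ ⟨i, rfl⟩
    exact (coneMeasure κ δ (U i)).2
  · by_contra! hm0
    have hm_lt : m.1 < κ.ord := hm0
    obtain ⟨b, hb⟩ := Ordinal.ToType.exists_lt_coe (isSuccLimit_ord hκ) hm_lt
    obtain ⟨i, hi⟩ := hU _ (isOpen_cone x b) (mem_cone_self x b)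
    exact (hm ⟨i, rfl⟩).not_gt
      (lt_coneRank_of_isConeSmall hm_lt (isConeSmall_of_subset_cone hδ hb hi))

theorem isWeakMeasureSpaceLT_coneMeasure (hκ : ℵ₀ ≤ κ) (hδ : δ.IsRegular) (hδA : δ ≤ #A) :
    IsWeakMeasureSpaceLT (GSeq κ.ord.ToType A) δ (RevOrd κ) univ (coneMeasure κ δ) where
  open_mem _ _ := trivial
  sUnion_mem _ _ _ := trivial
  measure_empty := Subtype.ext (coneRank_empty hδ.pos)
  measure_univ_pos :=
    have : Nonempty A := mk_ne_zero_iff.1 (hδ.pos.trans_le hδA).ne'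
    coneMeasure_pos hκ hδA isOpen_univ ⟨fun _ => Classical.arbitrary A, trivial⟩
  mono _ _ _ _ := coneMeasure_mono
  additive _ S hγ _ _ :=
    isLUB_coneMeasure_iUnion hδ (by rwa [mk_toType, ← lt_ord]) S
  point_reg x _ U _ _ _ hU :=
    isGLB_coneMeasure_singleton hκ (one_lt_aleph0.trans_le hδ.aleph0_le) x U hU

theorem measureContinuous_coneMeasure (hκ : ℵ₀ ≤ κ) (hδ : 1 < δ) :
    MeasureContinuous univ (coneMeasure κ δ : Set (GSeq κ.ord.ToType A) → RevOrd κ) :=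
  fun x => ⟨trivial, coneMeasure_singleton hκ hδ x⟩

end Measure

end GSeq

theorem statement_18_general (κ lam δ : Cardinal) (hκ : κ.IsRegular)
    (hδ : δ.IsRegular) (hδlam : δ ≤ lam) :
    ∃ (M : Set (Set (GSeq κ.ord.ToType lam.ord.ToType)))
      (μ : Set (GSeq κ.ord.ToType lam.ord.ToType) → RevOrd κ),
      IsWeakMeasureSpaceLT (GSeq κ.ord.ToType lam.ord.ToType) δ (RevOrd κ) M μ ∧
      MeasureContinuous M μ ∧
      ∀ O : Set (GSeq κ.ord.ToType lam.ord.ToType), IsOpen O → O.Nonempty → 0 < μ O := by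
  have hδA : δ ≤ #lam.ord.ToType := by rwa [mk_ord_toType]
  exact ⟨univ, GSeq.coneMeasure κ δ, GSeq.isWeakMeasureSpaceLT_coneMeasure hκ.aleph0_le hδ hδA,
    GSeq.measureContinuous_coneMeasure hκ.aleph0_le (one_lt_aleph0.trans_le hδ.aleph0_le),
    fun _ hO hne => GSeq.coneMeasure_pos hκ.aleph0_le hδA hO hne⟩

/-- for infinite cardinals `κ ≤ λ` with `κ` regular and any regular `δ ≤ λ`,
there is a continuous weak `δ`-measure space on `ᵏλ`, with values in the reverse-ordered
monoid of ordinals `≤ κ`, whose support is all of `ᵏλ` (every nonempty open set has positive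
measure). -/
theorem statement_18 (κ lam δ : Cardinal) (hκ : κ.IsRegular) (hlam : ℵ₀ ≤ lam)
    (hκlam : κ ≤ lam) (hδ : δ.IsRegular) (hδlam : δ ≤ lam) :
    ∃ (M : Set (Set (GSeq κ.ord.ToType lam.ord.ToType)))
      (μ : Set (GSeq κ.ord.ToType lam.ord.ToType) → RevOrd κ),
      IsWeakMeasureSpaceLT (GSeq κ.ord.ToType lam.ord.ToType) δ (RevOrd κ) M μ ∧
      MeasureContinuous M μ ∧
      ∀ O : Set (GSeq κ.ord.ToType lam.ord.ToType), IsOpen O → O.Nonempty → 0 < μ O :=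
  statement_18_general κ lam δ hκ hδ hδlam
end
end
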